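/- Under the LOS error dynamics e'(t) = -U * e(t) / sqrt(Δ² + e(t)²) with U, Δ > 0, if |e(t)| ≤ M for all t ≥ 0 with M ≥ 0, then e(t)² ≤ e(0)² * exp(-2U t / sqrt(Δ² + M²)) for all t ≥ 0; in particular e(t) → 0 exponentially. -/

import Mathlib

/-!
Along the dynamics, `(e²)' = -2U e² / √(Δ² + e²)`, and while `|e| ≤ M` this is at most
`-(2U / √(Δ² + M²)) e²`; Grönwall's inequality turns this linear differential inequality into
the exponential bound.
-/

open Real Set

theorem le_mul_exp_of_deriv_right_le_mul {f f' : ℝ → ℝ} {K a b : ℝ}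
    (hf : ContinuousOn f (Icc a b)) (hf' : ∀ x ∈ Ico a b, HasDerivWithinAt f (f' x) (Ici x) x)
    (bound : ∀ x ∈ Ico a b, f' x ≤ K * f x) :
    ∀ x ∈ Icc a b, f x ≤ f a * exp (K * (x - a)) := by
  intro x hx
  rw [← gronwallBound_ε0]
  refine le_gronwallBound_of_liminf_deriv_right_le hf
    (fun y hy _ hr => (hf' y hy).liminf_right_slope_le hr) le_rfl (fun y hy => ?_) x hx
  simpa using bound y hy

theorem sq_div_sqrt_le_sq_div_sqrt_of_abs_le {x M : ℝ} (Δ : ℝ) (hx : |x| ≤ M) :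
    x ^ 2 / √(Δ ^ 2 + M ^ 2) ≤ x ^ 2 / √(Δ ^ 2 + x ^ 2) := by
  rcases eq_or_ne x 0 with rfl | hx0
  · simp
  have hsq : x ^ 2 ≤ M ^ 2 := sq_le_sq' (abs_le.1 hx).1 (abs_le.1 hx).2
  exact div_le_div_of_nonneg_left (sq_nonneg x) (sqrt_pos.2 (by positivity))
    (sqrt_le_sqrt (by linarith))

theorem los_sq_error_exp_decay_general (e : ℝ → ℝ) (U Δ M : ℝ)
    (hU : 0 < U) (hdiff : Differentiable ℝ e)
    (hode : ∀ t, deriv e t = -U * e t / Real.sqrt (Δ ^ 2 + (e t) ^ 2))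
    (hbd : ∀ t, 0 ≤ t → |e t| ≤ M) :
    ∀ t, 0 ≤ t →
      (e t) ^ 2 ≤ (e 0) ^ 2 * Real.exp (-2 * U * t / Real.sqrt (Δ ^ 2 + M ^ 2)) := by
  intro t ht
  have hderiv : ∀ x, HasDerivAt (fun s => e s ^ 2) (2 * e x * deriv e x) x := fun x => by
    simpa using (hdiff x).hasDerivAt.fun_pow 2
  have hbound : ∀ x ∈ Ico 0 t,
      2 * e x * deriv e x ≤ -(2 * U / √(Δ ^ 2 + M ^ 2)) * e x ^ 2 := fun x hx => by
    have hrate := sq_div_sqrt_le_sq_div_sqrt_of_abs_le Δ (hbd x hx.1)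
    calc 2 * e x * deriv e x = -(2 * U) * (e x ^ 2 / √(Δ ^ 2 + e x ^ 2)) := by
          rw [hode]; ring
      _ ≤ -(2 * U) * (e x ^ 2 / √(Δ ^ 2 + M ^ 2)) := mul_le_mul_of_nonpos_left hrate (by linarith)
      _ = _ := by ring
  have hgronwall := le_mul_exp_of_deriv_right_le_mul (fun x _ => (hderiv x).continuousAt.continuousWithinAt)
    (fun x _ => (hderiv x).hasDerivWithinAt) hbound t ⟨ht, le_rfl⟩
  convert hgronwall using 3
  ring

/-- Under the LOS error dynamics with a uniform bound |e| ≤ M, the squared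
cross-track error decays exponentially. -/
theorem los_sq_error_exp_decay (e : ℝ → ℝ) (U Δ M : ℝ)
    (hU : 0 < U) (hΔ : 0 < Δ) (hM : 0 ≤ M) (hdiff : Differentiable ℝ e)
    (hode : ∀ t, deriv e t = -U * e t / Real.sqrt (Δ ^ 2 + (e t) ^ 2))
    (hbd : ∀ t, 0 ≤ t → |e t| ≤ M) :
    ∀ t, 0 ≤ t →
      (e t) ^ 2 ≤ (e 0) ^ 2 * Real.exp (-2 * U * t / Real.sqrt (Δ ^ 2 + M ^ 2)) :=
  los_sq_error_exp_decay_general e U Δ M hU hdiff hode hbd
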